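/- Let k be a positive integer with gcd(k, 6) = 1, and suppose the set of T-cycles contained in D_k is finite, with cardinality α(k). For n ≥ 1 let ν_n(k) be the number of primitive 0–1 vectors v of length n such that x(v) has denominator k in lowest terms. Then α(k) = ∑_{n=1}^∞ ν_n(k)/n, where each term ν_n(k)/n is a nonnegative integer and only finitely many terms are nonzero (Proposition 3.1, claim 4). -/

import Mathlib

/-!
A periodic point `x` of `T` of period `n` is determined by its parity vector `v` (the parities of
`x, T x, …, T^[n-1] x`): iterating the two affine branches gives `x = (3^ω(v) x + ρ(v)) / 2^n`,
i.e. `x = x(v)`. Conversely `T` acts on the points `x(v)` by rotating `v`, so `x(v)` has exact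
period `n` iff `v` is primitive, and `v ↦ x(v)` is a bijection between primitive vectors of length
`n` and points of exact period `n`. When `gcd(k, 6) = 1`, `T` maps `D_k` into itself, so the points
of `D_k` of exact period `n` split into the `T`-cycles of length `n` in `D_k`, each contributing
`n` points: `ν_n(k) = n · #{cycles of length n}`.
-/

/-- The `3x+1` function on rationals: `T x = x/2` if the numerator of `x` is even,
and `T x = (3x+1)/2` if the numerator of `x` is odd. -/
noncomputable def T (x : ℚ) : ℚ := if Even x.num then x / 2 else (3 * x + 1) / 2

/-- `ρ(v) = ∑_{j=0}^{n-1} v_j ⬝ 3^{v_{j+1} + ⋯ + v_{n-1}} ⬝ 2^j`, for a `0-1` vector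
encoded as a list. -/
def rhoL : List ℕ → ℕ
  | [] => 0
  | a :: t => a * 3 ^ t.sum + 2 * rhoL t

/-- `x(v) = ρ(v) / (2^n - 3^{ω(v)})`, where `n` is the length of `v` and
`ω(v)` is the sum of its entries. -/
noncomputable def xL (l : List ℕ) : ℚ :=
  (rhoL l : ℚ) / ((2 : ℚ) ^ l.length - (3 : ℚ) ^ l.sum)

/-- A vector is primitive if its cyclic rotations are pairwise distinct, i.e. no
nontrivial rotation fixes it. -/
def Primitive (l : List ℕ) : Prop := ∀ m, 1 ≤ m → m < l.length → l.rotate m ≠ l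

/-- The set of `T`-cycles contained in `D_k`. -/
def cyclesIn (k : ℕ) : Set (Set ℚ) :=
  {c | ∃ x : ℚ, ∃ n : ℕ, 1 ≤ n ∧ x.den = k ∧ T^[n] x = x ∧
    c = {y | ∃ j : ℕ, T^[j] x = y}}

/-- `ν_n(k)`: the number of primitive `0-1` vectors of length `n` such that `x(v)`
has denominator `k` in lowest terms. -/
noncomputable def nu (n k : ℕ) : ℕ :=
  {l : List ℕ | l.length = n ∧ (∀ a ∈ l, a = 0 ∨ a = 1) ∧ Primitive l ∧
    (xL l).den = k}.ncard

open Function Set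

namespace Function

variable {α : Type*} {f : α → α} {x y : α} {S : Set α} {n : ℕ}

theorem minimalPeriod_eq_iff_of_isPeriodicPt (hn : 0 < n) (hx : IsPeriodicPt f n x) :
    minimalPeriod f x = n ↔ ∀ m, 0 < m → m < n → ¬IsPeriodicPt f m x := by
  refine ⟨fun h m hm hmn => not_isPeriodicPt_of_pos_of_lt_minimalPeriod hm.ne' (h ▸ hmn),
    fun h => ?_⟩
  by_contra hne
  exact h _ (hx.minimalPeriod_pos hn)
    ((Nat.le_of_dvd hn hx.minimalPeriod_dvd).lt_of_ne hne) (isPeriodicPt_minimalPeriod f x)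

theorem ncard_range_iterate (hx : x ∈ periodicPts f) :
    (range (f^[·] x)).ncard = minimalPeriod f x := by
  have hrange : range (f^[·] x) = (f^[·] x) '' Iio (minimalPeriod f x) := by
    refine (range_subset_iff.2 fun j => ?_).antisymm (image_subset_range _ _)
    exact ⟨j % minimalPeriod f x, Nat.mod_lt _ (minimalPeriod_pos_of_mem_periodicPts hx),
      iterate_mod_minimalPeriod_eq⟩
  rw [hrange, iterate_injOn_Iio_minimalPeriod.ncard_image, ncard_Iio_nat]

theorem range_iterate_iterate_subset (j : ℕ) : range (f^[·] (f^[j] x)) ⊆ range (f^[·] x) := by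
  rintro _ ⟨i, rfl⟩
  exact ⟨i + j, iterate_add_apply f i j x⟩

theorem range_iterate_eq_of_mem (hx : x ∈ periodicPts f) (hy : y ∈ range (f^[·] x)) :
    range (f^[·] y) = range (f^[·] x) := by
  obtain ⟨j, rfl⟩ := hy
  refine (range_iterate_iterate_subset j).antisymm ?_
  obtain ⟨p, hp, hpx⟩ := hx
  have hback : f^[p * j - j] (f^[j] x) = x := by
    rw [← iterate_add_apply, Nat.sub_add_cancel (Nat.le_mul_of_pos_left j hp), (hpx.mul_const j).eq]
  have h := range_iterate_iterate_subset (f := f) (x := f^[j] x) (p * j - j)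
  rwa [hback] at h

def periodicOrbitsIn (f : α → α) (S : Set α) : Set (Set α) :=
  (fun x => range (f^[·] x)) '' (S ∩ periodicPts f)

theorem ncard_pos_of_mem_periodicOrbitsIn {c : Set α} (hc : c ∈ periodicOrbitsIn f S) :
    0 < c.ncard := by
  obtain ⟨x, ⟨-, hx⟩, rfl⟩ := hc
  rw [ncard_range_iterate hx]
  exact minimalPeriod_pos_of_mem_periodicPts hx

theorem pairwiseDisjoint_periodicOrbitsIn : (periodicOrbitsIn f S).PairwiseDisjoint id := by
  rintro _ ⟨x, ⟨-, hx⟩, rfl⟩ _ ⟨x', ⟨-, hx'⟩, rfl⟩ hne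
  refine Set.disjoint_left.2 fun y hy hy' => hne ?_
  dsimp only at hy hy' ⊢
  rw [← range_iterate_eq_of_mem hx hy, range_iterate_eq_of_mem hx' hy']

theorem setOf_minimalPeriod_eq_biUnion (hS : MapsTo f S S) (hn : 0 < n) :
    {x ∈ S | minimalPeriod f x = n} = ⋃ c ∈ {c ∈ periodicOrbitsIn f S | c.ncard = n}, c := by
  ext y
  simp only [mem_sep_iff, mem_iUnion, exists_prop]
  constructor
  · rintro ⟨hyS, rfl⟩
    have hy : y ∈ periodicPts f := minimalPeriod_pos_iff_mem_periodicPts.1 hn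
    exact ⟨_, ⟨⟨y, ⟨hyS, hy⟩, rfl⟩, ncard_range_iterate hy⟩, 0, rfl⟩
  · rintro ⟨_, ⟨⟨x, ⟨hxS, hx⟩, rfl⟩, rfl⟩, j, rfl⟩
    exact ⟨hS.iterate j hxS, by rw [minimalPeriod_apply_iterate hx, ncard_range_iterate hx]⟩

theorem ncard_setOf_minimalPeriod_eq (hS : MapsTo f S S) (hfin : (periodicOrbitsIn f S).Finite)
    (hn : 0 < n) :
    {x ∈ S | minimalPeriod f x = n}.ncard = n * {c ∈ periodicOrbitsIn f S | c.ncard = n}.ncard := by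
  have hfin' := hfin.sep fun c => c.ncard = n
  have hunion := hfin'.ncard_biUnion (s := id)
    (fun _ hc => finite_of_ncard_pos (ncard_pos_of_mem_periodicOrbitsIn hc.1))
    (pairwiseDisjoint_periodicOrbitsIn.subset (sep_subset _ _))
  simp only [id] at hunion
  rw [setOf_minimalPeriod_eq_biUnion hS hn, hunion, finsum_mem_congr rfl fun c hc => hc.2,
    finsum_mem_eq_finite_toFinset_sum _ hfin', Finset.sum_const, smul_eq_mul,
    ncard_eq_toFinset_card _ hfin', mul_comm]

end Function

theorem Set.Finite.ncard_eq_sum_ncard_fiber {ι M : Type*} [DecidableEq M] {t : Set ι}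
    (ht : t.Finite) {g : ι → M} {s : Finset M} (hg : ∀ i ∈ t, g i ∈ s) :
    t.ncard = ∑ b ∈ s, {i ∈ t | g i = b}.ncard := by
  obtain ⟨t, rfl⟩ := ht.exists_finset_coe
  rw [ncard_coe_finset, Finset.card_eq_sum_card_fiberwise hg]
  exact Finset.sum_congr rfl fun b _ => by rw [← ncard_coe_finset, Finset.coe_filter]; rfl

theorem Rat.den_intCast_div_natCast {a : ℤ} {d : ℕ} (hd : 0 < d) (h : IsCoprime a d) :
    ((a : ℚ) / d).den = d := by
  have := Rat.den_div_eq_of_coprime (a := a) (b := d) (by exact_mod_cast hd)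
    (Int.isCoprime_iff_gcd_eq_one.1 h)
  exact_mod_cast this

theorem Rat.even_num_intCast_div_iff {m d : ℤ} (hd : Odd d) :
    Even ((m : ℚ) / d).num ↔ Even m := by
  set q : ℚ := m / d
  have hd' : ¬Even d := Int.not_even_iff_odd.2 hd
  have hden_dvd : (q.den : ℤ) ∣ d := by simpa [q, Rat.divInt_eq_div] using Rat.den_dvd m d
  have hden : ¬Even (q.den : ℤ) := fun h =>
    hd' (even_iff_two_dvd.2 ((even_iff_two_dvd.1 h).trans hden_dvd))
  have hcross : q.num * d = m * q.den := by
    have hd0 : (d : ℚ) ≠ 0 := Int.cast_ne_zero.2 (by rintro rfl; exact hd' (by decide))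
    have : (q.num : ℚ) * d = m * q.den := by
      rw [← Rat.mul_den_eq_num]
      simp only [q]
      field_simp
    exact_mod_cast this
  have := congrArg Even hcross
  simp only [Int.even_mul, hd', hden, or_false, eq_iff_iff] at this
  exact this

theorem odd_two_pow_sub_three_pow {n : ℕ} (hn : n ≠ 0) (m : ℕ) : Odd ((2 : ℤ) ^ n - 3 ^ m) :=
  (Int.even_pow.2 ⟨even_two, hn⟩).sub_odd (Odd.pow (by decide))

theorem two_pow_sub_three_pow_ne_zero {n : ℕ} (hn : n ≠ 0) (m : ℕ) : (2 : ℚ) ^ n - 3 ^ m ≠ 0 := by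
  have h : ((2 : ℤ) ^ n - 3 ^ m) ≠ 0 := fun h => by
    simpa [h] using odd_two_pow_sub_three_pow hn m
  exact_mod_cast h

theorem xL_eq_intCast_div (l : List ℕ) :
    xL l = ((rhoL l : ℤ) : ℚ) / ((2 ^ l.length - 3 ^ l.sum : ℤ) : ℚ) := by
  push_cast; rfl

noncomputable def parityBit (x : ℚ) : ℕ := if Even x.num then 0 else 1

theorem T_eq_parityBit (x : ℚ) : T x = (3 ^ parityBit x * x + parityBit x) / 2 := by
  unfold T parityBit
  split_ifs <;> push_cast <;> ring

theorem parityBit_eq_zero_or_one (x : ℚ) : parityBit x = 0 ∨ parityBit x = 1 := by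
  unfold parityBit
  split_ifs <;> simp

theorem parityBit_xL_cons {a : ℕ} (ha : a = 0 ∨ a = 1) (t : List ℕ) :
    parityBit (xL (a :: t)) = a := by
  have h : Even (xL (a :: t)).num ↔ Even a := by
    rw [xL_eq_intCast_div, Rat.even_num_intCast_div_iff (odd_two_pow_sub_three_pow (by simp) _)]
    have h3 : ¬Even ((3 : ℤ) ^ t.sum) := Int.not_even_iff_odd.2 (Odd.pow (by decide))
    simp [rhoL, Int.even_add, Int.even_mul, h3]
  unfold parityBit
  rcases ha with rfl | rfl <;> simp_all

theorem rhoL_append_singleton (t : List ℕ) (a : ℕ) :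
    rhoL (t ++ [a]) = 3 ^ a * rhoL t + a * 2 ^ t.length := by
  induction t with
  | nil => simp [rhoL]
  | cons b t ih =>
    simp only [List.cons_append, rhoL, ih, List.sum_append, List.sum_singleton, List.length_cons]
    ring

theorem T_xL_cons {a : ℕ} (ha : a = 0 ∨ a = 1) (t : List ℕ) :
    T (xL (a :: t)) = xL (t ++ [a]) := by
  have hD := two_pow_sub_three_pow_ne_zero t.length.succ_ne_zero (a + t.sum)
  rw [T_eq_parityBit, parityBit_xL_cons ha]
  simp only [xL, rhoL, rhoL_append_singleton, List.length_cons, List.sum_cons, List.length_append,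
    List.sum_append, List.length_nil, List.sum_nil, zero_add, add_zero, add_comm t.sum a]
  push_cast
  field_simp
  ring

noncomputable def parityVector (x : ℚ) (n : ℕ) : List ℕ :=
  List.ofFn fun j : Fin n => parityBit (T^[j] x)

section ParityVector

variable {x : ℚ} {n : ℕ} {l l' : List ℕ}

theorem length_parityVector : (parityVector x n).length = n := List.length_ofFn

theorem eq_zero_or_one_of_mem_parityVector {a : ℕ} (h : a ∈ parityVector x n) : a = 0 ∨ a = 1 := by
  obtain ⟨j, rfl⟩ := List.mem_ofFn.1 h
  exact parityBit_eq_zero_or_one _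

theorem parityVector_succ : parityVector x (n + 1) = parityBit x :: parityVector (T x) n := by
  simp [parityVector, List.ofFn_succ, iterate_succ_apply]

theorem iterate_T_eq_parityVector (x : ℚ) (n : ℕ) :
    T^[n] x = (3 ^ (parityVector x n).sum * x + rhoL (parityVector x n)) / 2 ^ n := by
  induction n generalizing x with
  | zero => simp [parityVector, rhoL]
  | succ n ih =>
    rw [iterate_succ_apply, ih, parityVector_succ, T_eq_parityBit]
    simp only [List.sum_cons, rhoL, pow_add, pow_succ]
    push_cast
    field_simp
    ring

theorem xL_parityVector_of_isPeriodicPt (hn : 0 < n) (hx : IsPeriodicPt T n x) :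
    xL (parityVector x n) = x := by
  have h := iterate_T_eq_parityVector x n
  rw [hx.eq] at h
  rw [xL, length_parityVector, div_eq_iff (two_pow_sub_three_pow_ne_zero hn.ne' _)]
  field_simp at h
  linarith

theorem iterate_T_xL (h01 : ∀ a ∈ l, a = 0 ∨ a = 1) (j : ℕ) : T^[j] (xL l) = xL (l.rotate j) := by
  induction j with
  | zero => simp
  | succ j ih =>
    rw [iterate_succ_apply', ih, ← List.rotate_rotate]
    cases h : l.rotate j with
    | nil => simp [xL, rhoL, T]
    | cons b u =>
      have hb : b ∈ l := List.mem_rotate.1 (h ▸ List.mem_cons_self)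
      rw [T_xL_cons (h01 b hb), List.rotate_cons_succ, List.rotate_zero]

theorem parityVector_xL (h01 : ∀ a ∈ l, a = 0 ∨ a = 1) : parityVector (xL l) l.length = l := by
  refine List.ext_getElem length_parityVector fun j _ hj => ?_
  simp only [parityVector, List.getElem_ofFn]
  rw [iterate_T_xL h01, List.rotate_eq_drop_append_take hj.le,
    List.drop_eq_getElem_cons hj, List.cons_append, parityBit_xL_cons (h01 _ (List.getElem_mem hj))]

theorem eq_of_xL_eq (h01 : ∀ a ∈ l, a = 0 ∨ a = 1) (h01' : ∀ a ∈ l', a = 0 ∨ a = 1)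
    (hlen : l.length = l'.length) (h : xL l = xL l') : l = l' := by
  rw [← parityVector_xL h01, ← parityVector_xL h01', h, hlen]

theorem isPeriodicPt_T_xL_iff (h01 : ∀ a ∈ l, a = 0 ∨ a = 1) (m : ℕ) :
    IsPeriodicPt T m (xL l) ↔ l.rotate m = l := by
  rw [IsPeriodicPt, IsFixedPt, iterate_T_xL h01]
  exact ⟨eq_of_xL_eq (fun a ha => h01 a (List.mem_rotate.1 ha)) h01 (l.length_rotate m),
    congrArg xL⟩

theorem minimalPeriod_T_xL_eq_length_iff (h01 : ∀ a ∈ l, a = 0 ∨ a = 1) (hl : l ≠ []) :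
    minimalPeriod T (xL l) = l.length ↔ Primitive l := by
  rw [minimalPeriod_eq_iff_of_isPeriodicPt (List.length_pos_of_ne_nil hl)
    ((isPeriodicPt_T_xL_iff h01 _).2 l.rotate_length)]
  simp only [isPeriodicPt_T_xL_iff h01]
  rfl

end ParityVector

theorem den_T {x : ℚ} (hx : x.den.Coprime 6) : (T x).den = x.den := by
  have hcop : IsCoprime x.num x.den := Int.isCoprime_iff_gcd_eq_one.2 x.reduced
  unfold T
  split_ifs with h
  · obtain ⟨q, hq⟩ := h
    have hval : x / 2 = q / x.den := by
      conv_lhs => rw [← Rat.num_div_den x, hq]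
      push_cast
      field_simp
      ring
    rw [hval, Rat.den_intCast_div_natCast x.den_pos]
    rw [hq, ← two_mul] at hcop
    exact hcop.of_mul_left_right
  · have hden_odd : Odd (x.den : ℤ) := by
      exact_mod_cast (Nat.Coprime.coprime_dvd_right (by norm_num) hx : x.den.Coprime 2).odd_of_right
    obtain ⟨q, hq⟩ := ((Int.not_even_iff_odd.1 h).mul (by decide : Odd (3 : ℤ))).add_odd hden_odd
    have hval : (3 * x + 1) / 2 = q / x.den := by
      conv_lhs => rw [← Rat.num_div_den x]
      have hq' : (x.num * 3 + x.den : ℚ) = q + q := by exact_mod_cast hq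
      field_simp
      linear_combination hq'
    rw [hval, Rat.den_intCast_div_natCast x.den_pos]
    have h3 : IsCoprime (3 : ℤ) x.den := Int.isCoprime_iff_gcd_eq_one.2
      (Nat.Coprime.coprime_dvd_right (by norm_num) hx).symm
    have h2q : IsCoprime (2 * q) x.den := by
      rw [two_mul, ← hq]
      simpa using (hcop.mul_left h3).add_mul_left_left 1
    exact h2q.of_mul_left_right

theorem nu_eq_ncard {n : ℕ} (hn : 0 < n) (k : ℕ) :
    nu n k = {y : ℚ | y.den = k ∧ minimalPeriod T y = n}.ncard := by
  have himage : xL '' {l : List ℕ | l.length = n ∧ (∀ a ∈ l, a = 0 ∨ a = 1) ∧ Primitive l ∧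
      (xL l).den = k} = {y | y.den = k ∧ minimalPeriod T y = n} := by
    ext y
    constructor
    · rintro ⟨l, ⟨rfl, h01, hprim, hden⟩, rfl⟩
      exact ⟨hden, (minimalPeriod_T_xL_eq_length_iff h01 (List.ne_nil_of_length_pos hn)).2 hprim⟩
    · rintro ⟨hden, hper⟩
      have hxL := xL_parityVector_of_isPeriodicPt hn (hper ▸ isPeriodicPt_minimalPeriod T y)
      have h01 : ∀ a ∈ parityVector y n, a = 0 ∨ a = 1 :=
        fun _ => eq_zero_or_one_of_mem_parityVector
      have hne : parityVector y n ≠ [] := List.ne_nil_of_length_pos (length_parityVector ▸ hn)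
      refine ⟨parityVector y n, ⟨length_parityVector, h01, ?_, hxL.symm ▸ hden⟩, hxL⟩
      rw [← minimalPeriod_T_xL_eq_length_iff h01 hne, hxL, length_parityVector, hper]
  rw [nu, ← himage, InjOn.ncard_image]
  rintro l ⟨hl, h01, -⟩ l' ⟨hl', h01', -⟩ h
  exact eq_of_xL_eq h01 h01' (hl.trans hl'.symm) h

theorem cyclesIn_eq_periodicOrbitsIn (k : ℕ) : cyclesIn k = periodicOrbitsIn T {x | x.den = k} := by
  ext c
  constructor
  · rintro ⟨x, n, hn, hden, hx, rfl⟩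
    exact ⟨x, ⟨hden, mk_mem_periodicPts hn hx⟩, rfl⟩
  · rintro ⟨x, ⟨hden, n, hn, hx⟩, rfl⟩
    exact ⟨x, n, hn, hden, hx, rfl⟩

theorem stmt_11_general (k : ℕ) (h6 : Nat.gcd k 6 = 1)
    (hfin : (cyclesIn k).Finite) :
    (∀ n, 1 ≤ n → n ∣ nu n k) ∧
    ∃ N : ℕ, (∀ n, N < n → nu n k = 0) ∧
      (cyclesIn k).ncard = ∑ n ∈ Finset.Icc 1 N, nu n k / n := by
  have hmaps : MapsTo T {x : ℚ | x.den = k} {x | x.den = k} :=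
    fun x (hx : x.den = k) => (den_T (hx ▸ h6)).trans hx
  rw [cyclesIn_eq_periodicOrbitsIn] at hfin ⊢
  set cycles := periodicOrbitsIn T {x : ℚ | x.den = k}
  have hnu : ∀ n, 0 < n → nu n k = n * {c ∈ cycles | c.ncard = n}.ncard := fun n hn => by
    rw [nu_eq_ncard hn, ← ncard_setOf_minimalPeriod_eq hmaps hfin hn, sep_ofPred]
  obtain ⟨N, hN⟩ := (hfin.image ncard).bddAbove
  have hlen : ∀ c ∈ cycles, c.ncard ∈ Finset.Icc 1 N := fun c hc =>
    Finset.mem_Icc.2 ⟨ncard_pos_of_mem_periodicOrbitsIn hc, hN (mem_image_of_mem _ hc)⟩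
  refine ⟨fun n hn => hnu n hn ▸ dvd_mul_right n _, N, fun n hn => ?_, ?_⟩
  · have hempty : {c ∈ cycles | c.ncard = n} = ∅ :=
      eq_empty_of_forall_notMem fun c ⟨hc, hcn⟩ => by
        have := (Finset.mem_Icc.1 (hlen c hc)).2
        omega
    rw [hnu n (by omega), hempty, ncard_empty, mul_zero]
  · rw [hfin.ncard_eq_sum_ncard_fiber hlen]
    refine Finset.sum_congr rfl fun n hn => ?_
    have hn : 0 < n := (Finset.mem_Icc.1 hn).1
    rw [hnu n hn, Nat.mul_div_cancel_left _ hn]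

/-- Proposition 3.1, claim 4: if the set of `T`-cycles contained in `D_k` is finite
with cardinality `α(k)`, then `α(k) = ∑_{n≥1} ν_n(k)/n`, where each term is a
nonnegative integer and only finitely many terms are nonzero. -/
theorem stmt_11 (k : ℕ) (hk : 0 < k) (h6 : Nat.gcd k 6 = 1)
    (hfin : (cyclesIn k).Finite) :
    (∀ n, 1 ≤ n → n ∣ nu n k) ∧
    ∃ N : ℕ, (∀ n, N < n → nu n k = 0) ∧
      (cyclesIn k).ncard = ∑ n ∈ Finset.Icc 1 N, nu n k / n :=
  stmt_11_general k h6 hfin
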